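/- arXiv:2601.11241 — 2 statements merged into one kernel-verified Lean document; each statement's English description precedes it below -/
import Mathlib

section
/- For s ∈ (0, 1), let c_s = 2^{1+2s} C_{1,s} P.V. ∫_{−∞}^{+∞} z e^{(1/2−s)z} |sinh(z/2)|^{−(1+2s)} dz. Then c_s > 0 for s ∈ (0, 1/2), c_{1/2} = 0, and c_s < 0 for s ∈ (1/2, 1). -/
/-!
Folding the principal value integral onto `(0, ∞)` via `z ↦ -z` turns it into the integral of
`2 z sinh((1/2 - s) z) / sinh(z/2)^(1+2s)`. This converges absolutely: the odd part of the
integrand cancels its singularity `z^(-2s)` at the origin (non-integrable for `s ≥ 1/2`), leaving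
`O(z^(1-2s))`, and both tails decay exponentially because `|1/2 - s| < (1+2s)/2`. The folded
integrand has the sign of `1/2 - s` on `(0, ∞)`, and the prefactor `2^(1+2s) C_{1,s}` is positive.
-/

open Filter MeasureTheory Metric Set Topology

noncomputable section

/-- The standard normalizing constant of the fractional Laplacian on ℝ. -/
noncomputable def C1s (s : ℝ) : ℝ :=
  4 ^ s * Real.Gamma ((1 : ℝ) / 2 + s) / (Real.pi ^ ((1 : ℝ) / 2) * |Real.Gamma (-s)|)

/-- The constant `c_s = 2^{1+2s} C_{1,s} P.V.∫ z e^{(1/2−s)z} |sinh(z/2)|^{−(1+2s)} dz`. -/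
noncomputable def csConst (s : ℝ) : ℝ :=
  2 ^ (1 + 2 * s) * C1s s *
    limUnder (nhdsWithin (0 : ℝ) (Set.Ioi 0))
      (fun ε : ℝ => ∫ z in {z : ℝ | ε < |z|},
        z * Real.exp ((1 / 2 - s) * z) / |Real.sinh (z / 2)| ^ (1 + 2 * s))

section PrincipalValue

variable {E : Type*} [NormedAddCommGroup E]

theorem setOf_lt_abs_eq_Iio_union_Ioi (ε : ℝ) : {z : ℝ | ε < |z|} = Iio (-ε) ∪ Ioi ε := by
  ext z
  simp only [mem_ofPred_eq, lt_abs, mem_union, mem_Iio, mem_Ioi, lt_neg]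
  tauto

theorem IntegrableOn.add_comp_neg_Ioi_of_lt_abs {f : ℝ → E} {ε : ℝ}
    (hf : IntegrableOn f {z | ε < |z|}) : IntegrableOn (fun z => f z + f (-z)) (Ioi ε) := by
  rw [setOf_lt_abs_eq_Iio_union_Ioi] at hf
  exact (hf.mono_set subset_union_right).add (hf.mono_set subset_union_left).comp_neg_Ioi

variable [NormedSpace ℝ E]

theorem setIntegral_lt_abs_eq_setIntegral_Ioi_add_comp_neg {f : ℝ → E} {ε : ℝ}
    (hε : 0 ≤ ε) (hf : IntegrableOn f {z | ε < |z|}) :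
    ∫ z in {z : ℝ | ε < |z|}, f z = ∫ z in Ioi ε, (f z + f (-z)) := by
  rw [setOf_lt_abs_eq_Iio_union_Ioi] at hf ⊢
  have hleft : IntegrableOn f (Iio (-ε)) := hf.mono_set subset_union_left
  have hright : IntegrableOn f (Ioi ε) := hf.mono_set subset_union_right
  rw [setIntegral_union ((Iio_disjoint_Ici (by linarith)).mono_right Ioi_subset_Ici_self)
      measurableSet_Ioi hleft hright,
    integral_add hright hleft.comp_neg_Ioi, integral_comp_neg_Ioi, integral_Iic_eq_integral_Iio,
    add_comm]

theorem tendsto_setIntegral_Ioi_nhdsGT {g : ℝ → E} {a : ℝ} (hg : IntegrableOn g (Ioi a)) :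
    Tendsto (fun ε => ∫ z in Ioi ε, g z) (𝓝[>] a) (𝓝 (∫ z in Ioi a, g z)) := by
  have hind : ∀ᶠ ε in 𝓝[>] a,
      ∫ z in Ioi a, (Ioi ε).indicator g z = ∫ z in Ioi ε, g z := by
    filter_upwards [self_mem_nhdsWithin] with ε hε
    rw [setIntegral_indicator measurableSet_Ioi, Ioi_inter_Ioi, sup_eq_right.2 (le_of_lt hε)]
  refine (tendsto_integral_filter_of_dominated_convergence (fun z => ‖g z‖) ?_ ?_ hg.norm
    ?_).congr' hind
  · exact .of_forall fun ε => hg.aestronglyMeasurable.indicator measurableSet_Ioi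
  · exact .of_forall fun ε => .of_forall fun z => norm_indicator_le_norm_self g z
  · filter_upwards [ae_restrict_mem measurableSet_Ioi] with z hz
    refine tendsto_const_nhds.congr' ?_
    filter_upwards [Ioo_mem_nhdsGT hz] with ε hε
    exact (indicator_of_mem hε.2 g).symm

theorem tendsto_setIntegral_lt_abs_nhdsGT {f : ℝ → E}
    (hf : ∀ ε > 0, IntegrableOn f {z | ε < |z|})
    (hg : IntegrableOn (fun z => f z + f (-z)) (Ioi 0)) :
    Tendsto (fun ε => ∫ z in {z : ℝ | ε < |z|}, f z) (𝓝[>] 0)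
      (𝓝 (∫ z in Ioi 0, (f z + f (-z)))) := by
  refine (tendsto_setIntegral_Ioi_nhdsGT hg).congr' ?_
  filter_upwards [self_mem_nhdsWithin] with ε hε
  exact (setIntegral_lt_abs_eq_setIntegral_Ioi_add_comp_neg (le_of_lt hε) (hf ε hε)).symm

end PrincipalValue

theorem setIntegral_pos_of_pos_on {X : Type*} [MeasurableSpace X] {μ : Measure X} {f : X → ℝ}
    {s : Set X} (hs : MeasurableSet s) (hμs : μ s ≠ 0) (hf : IntegrableOn f s μ)
    (hpos : ∀ x ∈ s, 0 < f x) : 0 < ∫ x in s, f x ∂μ := by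
  rw [setIntegral_pos_iff_support_of_nonneg_ae _ hf]
  · rwa [inter_eq_right.2 (show s ⊆ Function.support f from fun x hx => (hpos x hx).ne'),
      pos_iff_ne_zero]
  · filter_upwards [ae_restrict_mem hs] with x hx
    exact (hpos x hx).le

namespace Real

/-- `csConst s` is `2^(1+2s) C_{1,s}` times the principal value of
`pvKernel (1/2 - s) (1 + 2s)`. -/
def pvKernel (b p z : ℝ) : ℝ :=
  z * exp (b * z) / |sinh (z / 2)| ^ p

theorem pvKernel_neg (b p z : ℝ) : pvKernel b p (-z) = -pvKernel (-b) p z := by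
  simp only [pvKernel, neg_div, sinh_neg, abs_neg, neg_mul, mul_neg]

theorem pvKernel_add_pvKernel_neg (b p z : ℝ) :
    pvKernel b p z + pvKernel b p (-z) = 2 * z * sinh (b * z) / |sinh (z / 2)| ^ p := by
  rw [pvKernel_neg, pvKernel, pvKernel, sinh_eq (b * z), neg_mul]
  ring

theorem pvKernel_add_pvKernel_neg_pos {b p z : ℝ} (hb : 0 < b) (hz : 0 < z) :
    0 < pvKernel b p z + pvKernel b p (-z) := by
  rw [pvKernel_add_pvKernel_neg]
  have hsinh : 0 < sinh (z / 2) := sinh_pos_iff.2 (half_pos hz)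
  have hnum : 0 < sinh (b * z) := sinh_pos_iff.2 (mul_pos hb hz)
  exact div_pos (by positivity) (rpow_pos_of_pos (abs_pos.2 hsinh.ne') p)

theorem pvKernel_add_pvKernel_neg_neg {b p z : ℝ} (hb : b < 0) (hz : 0 < z) :
    pvKernel b p z + pvKernel b p (-z) < 0 := by
  have h := pvKernel_add_pvKernel_neg_pos (p := p) (neg_pos.2 hb) hz
  rw [pvKernel_neg, neg_neg] at h
  linarith [pvKernel_neg b p z]

@[fun_prop]
theorem measurable_pvKernel (b p : ℝ) : Measurable (pvKernel b p) := by
  unfold pvKernel; fun_prop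

theorem one_sub_exp_neg_mul_exp_le_two_mul_sinh {ε z : ℝ} (h : ε ≤ z) :
    (1 - exp (-ε)) * exp (z / 2) ≤ 2 * sinh (z / 2) := by
  have hsplit : exp (-(z / 2)) = exp (-z) * exp (z / 2) := by rw [← exp_add]; ring_nf
  have hmono : exp (-z) ≤ exp (-ε) := exp_le_exp.2 (neg_le_neg h)
  rw [sinh_eq, hsplit]
  nlinarith [exp_pos (z / 2)]

theorem integrableOn_pvKernel_Ioi {b p ε : ℝ} (hp : 0 ≤ p) (hb : b < p / 2) (hε : 0 < ε) :
    IntegrableOn (pvKernel b p) (Ioi ε) := by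
  set c := (1 - exp (-ε)) / 2 with hc_def
  set k := p / 2 - b with hk_def
  have hc : 0 < c := by
    have : exp (-ε) < 1 := exp_lt_one_iff.2 (neg_lt_zero.2 hε)
    rw [hc_def]; linarith
  have hk : 0 < k := sub_pos.2 hb
  have hdom : IntegrableOn (fun z => (c ^ p)⁻¹ * (z * exp (-k * z))) (Ioi ε) := by
    have := integrableOn_rpow_mul_exp_neg_mul_rpow (s := 1) (p := 1) (by norm_num) one_pos hk
    simp only [rpow_one] at this
    exact (this.mono_set (Ioi_subset_Ioi hε.le)).const_mul _
  refine hdom.mono' (measurable_pvKernel b p).aestronglyMeasurable ?_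
  filter_upwards [ae_restrict_mem measurableSet_Ioi] with z hz
  have hz0 : 0 < z := hε.trans hz
  have hlow : c * exp (z / 2) ≤ |sinh (z / 2)| := by
    rw [abs_of_pos (sinh_pos_iff.2 (half_pos hz0)), hc_def]
    linarith [one_sub_exp_neg_mul_exp_le_two_mul_sinh (le_of_lt hz)]
  have hexp : exp (b * z) = exp (-k * z) * exp (z / 2) ^ p := by
    rw [← exp_mul, ← exp_add, hk_def]; ring_nf
  calc ‖pvKernel b p z‖ = z * exp (b * z) / |sinh (z / 2)| ^ p := by
        rw [norm_eq_abs, abs_of_nonneg (by unfold pvKernel; positivity)]; rfl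
    _ ≤ z * exp (b * z) / (c * exp (z / 2)) ^ p := by gcongr
    _ = (c ^ p)⁻¹ * (z * exp (-k * z)) := by
        rw [mul_rpow hc.le (exp_pos _).le, hexp]
        field_simp

theorem integrableOn_pvKernel_lt_abs {b p ε : ℝ} (hb : |b| < p / 2) (hε : 0 < ε) :
    IntegrableOn (pvKernel b p) {z | ε < |z|} := by
  have hp : 0 ≤ p := by linarith [abs_nonneg b]
  have hright := integrableOn_pvKernel_Ioi hp (lt_of_abs_lt hb) hε
  have hleft : IntegrableOn (pvKernel b p) (Iio (-ε)) := by
    have := IntegrableOn.comp_neg_Iio (c := -ε)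
      (by rw [neg_neg]; exact (integrableOn_pvKernel_Ioi hp ((neg_le_abs b).trans_lt hb) hε).neg)
    simpa only [Pi.neg_apply, pvKernel_neg, neg_neg] using this
  rw [setOf_lt_abs_eq_Iio_union_Ioi]
  exact hleft.union hright

theorem integrableOn_pvKernel_add_pvKernel_neg_Ioc {b p : ℝ} (hb : |b| ≤ 1 / 2) (hp : 1 ≤ p)
    (hp3 : p < 3) : IntegrableOn (fun z => pvKernel b p z + pvKernel b p (-z)) (Ioc 0 1) := by
  have hdom : IntegrableOn (fun z : ℝ => 2 ^ p * z ^ (2 - p)) (Ioc 0 1) :=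
    ((intervalIntegrable_iff_integrableOn_Ioc_of_le zero_le_one).1
      (intervalIntegral.intervalIntegrable_rpow' (by linarith))).const_mul _
  refine hdom.mono' (by fun_prop) ?_
  filter_upwards [ae_restrict_mem measurableSet_Ioc] with z hz
  have hz0 : 0 < z := hz.1
  have hsinh : 0 < sinh (z / 2) := sinh_pos_iff.2 (half_pos hz0)
  have hnum : |sinh (b * z)| ≤ sinh (z / 2) := by
    rw [abs_sinh, sinh_le_sinh, abs_mul, abs_of_pos hz0]
    nlinarith
  calc ‖pvKernel b p z + pvKernel b p (-z)‖
      = 2 * z * |sinh (b * z)| / sinh (z / 2) ^ p := by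
        rw [pvKernel_add_pvKernel_neg, norm_eq_abs, abs_div, abs_mul, abs_of_pos (by positivity),
          abs_of_pos hsinh, abs_of_pos (rpow_pos_of_pos hsinh p)]
    _ ≤ 2 * z * sinh (z / 2) / sinh (z / 2) ^ p := by gcongr
    _ = 2 * z * sinh (z / 2) ^ (1 - p) := by rw [rpow_sub hsinh, rpow_one, mul_div_assoc]
    _ ≤ 2 * z * (z / 2) ^ (1 - p) := by
        refine mul_le_mul_of_nonneg_left ?_ (by positivity)
        exact rpow_le_rpow_of_nonpos (half_pos hz0) (self_le_sinh_iff.2 (half_pos hz0).le)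
          (by linarith)
    _ = 2 ^ p * z ^ (2 - p) := by
        rw [div_rpow hz0.le zero_le_two, show 2 - p = 1 + (1 - p) by ring, rpow_add hz0, rpow_one,
          rpow_sub zero_lt_two, rpow_one]
        field_simp

theorem integrableOn_pvKernel_add_pvKernel_neg_Ioi {b p : ℝ} (hb : |b| < p / 2)
    (hb' : |b| ≤ 1 / 2) (hp : 1 ≤ p) (hp3 : p < 3) :
    IntegrableOn (fun z => pvKernel b p z + pvKernel b p (-z)) (Ioi 0) := by
  have h := (integrableOn_pvKernel_add_pvKernel_neg_Ioc hb' hp hp3).union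
    (IntegrableOn.add_comp_neg_Ioi_of_lt_abs (integrableOn_pvKernel_lt_abs hb one_pos))
  rwa [Ioc_union_Ioi_eq_Ioi zero_le_one] at h

end Real

open Real

theorem C1s_pos {s : ℝ} (hs : s ∈ Ioo (0 : ℝ) 1) : 0 < C1s s := by
  have hΓ : Gamma (-s) ≠ 0 := by
    refine Gamma_ne_zero fun m hm => ?_
    have h0 : 0 < m := by exact_mod_cast (show (0 : ℝ) < m by linarith [hs.1])
    have h1 : m < 1 := by exact_mod_cast (show (m : ℝ) < 1 by linarith [hs.2])
    omega
  unfold C1s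
  have := Gamma_pos_of_pos (show 0 < 1 / 2 + s by linarith [hs.1])
  positivity

theorem abs_half_sub_lt {s : ℝ} (hs : 0 < s) : |1 / 2 - s| < (1 + 2 * s) / 2 :=
  abs_lt.2 ⟨by linarith, by linarith⟩

theorem integrableOn_pvKernel_add_pvKernel_neg_Ioi_of_mem_Ioo {s : ℝ}
    (hs : s ∈ Ioo (0 : ℝ) 1) :
    IntegrableOn
      (fun z => pvKernel (1 / 2 - s) (1 + 2 * s) z + pvKernel (1 / 2 - s) (1 + 2 * s) (-z))
      (Ioi 0) :=
  integrableOn_pvKernel_add_pvKernel_neg_Ioi (abs_half_sub_lt hs.1)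
    (abs_le.2 ⟨by linarith [hs.2], by linarith [hs.1]⟩) (by linarith [hs.1])
    (by linarith [hs.2])

theorem csConst_eq_setIntegral {s : ℝ} (hs : s ∈ Ioo (0 : ℝ) 1) :
    csConst s = 2 ^ (1 + 2 * s) * C1s s *
      ∫ z in Ioi 0,
        (pvKernel (1 / 2 - s) (1 + 2 * s) z + pvKernel (1 / 2 - s) (1 + 2 * s) (-z)) := by
  have hlim := tendsto_setIntegral_lt_abs_nhdsGT
    (fun ε hε => integrableOn_pvKernel_lt_abs (abs_half_sub_lt hs.1) hε)
    (integrableOn_pvKernel_add_pvKernel_neg_Ioi_of_mem_Ioo hs)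
  exact congrArg (2 ^ (1 + 2 * s) * C1s s * ·) hlim.limUnder_eq

/-- Sign of the constant `c_s`. -/
theorem csConst_sign (s : ℝ) (hs : s ∈ Set.Ioo (0 : ℝ) 1) :
    (s < 1 / 2 → 0 < csConst s) ∧
    csConst (1 / 2) = 0 ∧
    (1 / 2 < s → csConst s < 0) := by
  have hpre : 0 < 2 ^ (1 + 2 * s) * C1s s := mul_pos (by positivity) (C1s_pos hs)
  have hint := integrableOn_pvKernel_add_pvKernel_neg_Ioi_of_mem_Ioo hs
  refine ⟨fun h => ?_, ?_, fun h => ?_⟩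
  · rw [csConst_eq_setIntegral hs]
    exact mul_pos hpre (setIntegral_pos_of_pos_on measurableSet_Ioi (by simp) hint
      fun z hz => pvKernel_add_pvKernel_neg_pos (by linarith) hz)
  · rw [csConst_eq_setIntegral (by norm_num)]
    simp [pvKernel_add_pvKernel_neg]
  · rw [csConst_eq_setIntegral hs]
    refine mul_neg_of_pos_of_neg hpre (neg_pos.1 ?_)
    rw [← integral_neg]
    exact setIntegral_pos_of_pos_on measurableSet_Ioi (by simp) hint.neg
      fun z hz => neg_pos.2 (pvKernel_add_pvKernel_neg_neg (by linarith) hz)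

end
end

section
/- Let N ≥ 2 and s ∈ (1/2, 1). There exist C > 0 and ρ₀ ∈ (0,1) such that for every ρ ∈ (0, ρ₀), ∫_{{y′ ∈ ℝ^{N−1} : |y′| ≥ 1/ρ}} ∫_{−1}^{+∞} |log(1+t)| · |(t,y′)|^{−(N+2s)} dt dy′ ≤ C ρ^{s} |log ρ|. -/
open Filter MeasureTheory Metric Set Topology

noncomputable section

/-- Euclidean space ℝ^N. -/
abbrev EucN (N : ℕ) := EuclideanSpace ℝ (Fin N)

/-- The standard normalizing constant of the fractional Laplacian on ℝ^N. -/
noncomputable def CNs (N : ℕ) (s : ℝ) : ℝ :=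
  4 ^ s * Real.Gamma ((N : ℝ) / 2 + s) / (Real.pi ^ ((N : ℝ) / 2) * |Real.Gamma (-s)|)

/-- Distance to the boundary of `Ω`. -/
noncomputable def bdist {N : ℕ} (Ω : Set (EucN N)) (x : EucN N) : ℝ :=
  Metric.infDist x (frontier Ω)

/-- The set `Ω_δ = {x ∈ Ω : d(x) > δ}`. -/
def innerSet {N : ℕ} (Ω : Set (EucN N)) (δ : ℝ) : Set (EucN N) :=
  {x ∈ Ω | δ < bdist Ω x}

/-- The filter of points of `Ω` whose distance to `∂Ω` tends to `0⁺`. -/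
def toBoundary {N : ℕ} (Ω : Set (EucN N)) : Filter (EucN N) :=
  Filter.comap (bdist Ω) (nhdsWithin 0 (Set.Ioi 0)) ⊓ Filter.principal Ω

/-- Principal value of `∫_A F` with singularity at `x₀` converging to `L`. -/
def HasPVAt {N : ℕ} (A : Set (EucN N)) (x₀ : EucN N) (F : EucN N → ℝ) (L : ℝ) : Prop :=
  Tendsto (fun ε : ℝ => ∫ z in A \ Metric.ball x₀ ε, F z) (nhdsWithin 0 (Set.Ioi 0)) (nhds L)

/-- The principal value of `∫_A F` with singularity at `x₀` (junk value if divergent). -/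
noncomputable def pvAt {N : ℕ} (A : Set (EucN N)) (x₀ : EucN N) (F : EucN N → ℝ) : ℝ :=
  limUnder (nhdsWithin (0 : ℝ) (Set.Ioi 0))
    (fun ε : ℝ => ∫ z in A \ Metric.ball x₀ ε, F z)

/-- The kernel `z ↦ (u z − u x)/|x − z|^{N+2s}`. -/
noncomputable def csKernel {N : ℕ} (s : ℝ) (u : EucN N → ℝ) (x z : EucN N) : ℝ :=
  (u z - u x) / dist x z ^ ((N : ℝ) + 2 * s)

/-- The censored fractional Laplacian `(−Δ)_Ω^s u (x)`. -/
noncomputable def censoredLap {N : ℕ} (Ω : Set (EucN N)) (s : ℝ) (u : EucN N → ℝ)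
    (x : EucN N) : ℝ :=
  -CNs N s * pvAt Ω x (csKernel s u x)

/-- The principal value defining `(−Δ)_Ω^s u (x)` converges. -/
def CensoredLapDefined {N : ℕ} (Ω : Set (EucN N)) (s : ℝ) (u : EucN N → ℝ)
    (x : EucN N) : Prop :=
  ∃ L : ℝ, HasPVAt Ω x (csKernel s u x) L

/-- `Ω` has `C²` boundary: local level-set description by `C²` defining functions. -/
def HasC2Boundary {N : ℕ} (Ω : Set (EucN N)) : Prop :=
  ∀ x ∈ frontier Ω, ∃ (U : Set (EucN N)) (φ : EucN N → ℝ),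
    IsOpen U ∧ x ∈ U ∧ ContDiffOn ℝ 2 φ U ∧ (∀ y ∈ U, fderiv ℝ φ y ≠ 0) ∧
    Ω ∩ U = {y ∈ U | φ y < 0} ∧ frontier Ω ∩ U = {y ∈ U | φ y = 0}

/-- Bounded domain with `C²` boundary. -/
def IsBoundedC2Domain {N : ℕ} (Ω : Set (EucN N)) : Prop :=
  IsOpen Ω ∧ IsConnected Ω ∧ Bornology.IsBounded Ω ∧ HasC2Boundary Ω

/-- Evaluation of the censored operator on a test function `φ` near `x₀` and on `u` far away. -/
noncomputable def testEval {N : ℕ} (Ω : Set (EucN N)) (s : ℝ) (u φ : EucN N → ℝ)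
    (x₀ : EucN N) (r : ℝ) : ℝ :=
  -CNs N s * (pvAt (Metric.ball x₀ r) x₀ (csKernel s φ x₀)
    + ∫ z in Ω \ Metric.ball x₀ r, csKernel s u x₀ z)

/-- Viscosity subsolution of `lam·u + (−Δ)_Ω^s u + T·|Du|^m = f` in `Ω'`. -/
def IsViscositySubsol {N : ℕ} (Ω Ω' : Set (EucN N)) (s lam T mexp : ℝ)
    (f u : EucN N → ℝ) : Prop :=
  ∀ x₀ ∈ Ω', ∀ r : ℝ, 0 < r → Metric.ball x₀ r ⊆ Ω' →
    ∀ φ : EucN N → ℝ, ContDiffOn ℝ 2 φ (Metric.ball x₀ r) →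
      φ x₀ = u x₀ → (∀ y ∈ Metric.ball x₀ r, u y ≤ φ y) →
      lam * u x₀ + testEval Ω s u φ x₀ r + T * ‖fderiv ℝ φ x₀‖ ^ mexp ≤ f x₀

/-- Viscosity supersolution of `lam·u + (−Δ)_Ω^s u + T·|Du|^m = f` in `Ω'`. -/
def IsViscositySupersol {N : ℕ} (Ω Ω' : Set (EucN N)) (s lam T mexp : ℝ)
    (f u : EucN N → ℝ) : Prop :=
  ∀ x₀ ∈ Ω', ∀ r : ℝ, 0 < r → Metric.ball x₀ r ⊆ Ω' →
    ∀ φ : EucN N → ℝ, ContDiffOn ℝ 2 φ (Metric.ball x₀ r) →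
      φ x₀ = u x₀ → (∀ y ∈ Metric.ball x₀ r, φ y ≤ u y) →
      f x₀ ≤ lam * u x₀ + testEval Ω s u φ x₀ r + T * ‖fderiv ℝ φ x₀‖ ^ mexp

/-- Viscosity solution. -/
def IsViscositySol {N : ℕ} (Ω Ω' : Set (EucN N)) (s lam T mexp : ℝ)
    (f u : EucN N → ℝ) : Prop :=
  IsViscositySubsol Ω Ω' s lam T mexp f u ∧ IsViscositySupersol Ω Ω' s lam T mexp f u

/-- Strict viscosity subsolution. -/
def IsStrictViscositySubsol {N : ℕ} (Ω Ω' : Set (EucN N)) (s lam T mexp : ℝ)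
    (f u : EucN N → ℝ) : Prop :=
  ∀ x₀ ∈ Ω', ∀ r : ℝ, 0 < r → Metric.ball x₀ r ⊆ Ω' →
    ∀ φ : EucN N → ℝ, ContDiffOn ℝ 2 φ (Metric.ball x₀ r) →
      φ x₀ = u x₀ → (∀ y ∈ Metric.ball x₀ r, u y ≤ φ y) →
      lam * u x₀ + testEval Ω s u φ x₀ r + T * ‖fderiv ℝ φ x₀‖ ^ mexp < f x₀

/-- Strict viscosity supersolution. -/
def IsStrictViscositySupersol {N : ℕ} (Ω Ω' : Set (EucN N)) (s lam T mexp : ℝ)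
    (f u : EucN N → ℝ) : Prop :=
  ∀ x₀ ∈ Ω', ∀ r : ℝ, 0 < r → Metric.ball x₀ r ⊆ Ω' →
    ∀ φ : EucN N → ℝ, ContDiffOn ℝ 2 φ (Metric.ball x₀ r) →
      φ x₀ = u x₀ → (∀ y ∈ Metric.ball x₀ r, φ y ≤ u y) →
      f x₀ < lam * u x₀ + testEval Ω s u φ x₀ r + T * ‖fderiv ℝ φ x₀‖ ^ mexp

/-- Local Hölder regularity of order `θ ∈ (k, k+1]`: `u ∈ C^{k,θ−k}_loc(Ω)`. -/
def CHolderLoc {N : ℕ} (θ : ℝ) (Ω : Set (EucN N)) (u : EucN N → ℝ) : Prop :=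
  ∃ k : ℕ, (k : ℝ) < θ ∧ θ ≤ (k : ℝ) + 1 ∧ ContDiffOn ℝ k u Ω ∧
    ∀ K : Set (EucN N), IsCompact K → K ⊆ Ω → ∃ C > 0, ∀ x ∈ K, ∀ y ∈ K,
      ‖iteratedFDerivWithin ℝ k u Ω x - iteratedFDerivWithin ℝ k u Ω y‖
        ≤ C * dist x y ^ (θ - k)

/-- `f` is locally Hölder continuous in `Ω`. -/
def LocHolder {N : ℕ} (Ω : Set (EucN N)) (f : EucN N → ℝ) : Prop :=
  ∃ θ : ℝ, θ ∈ Set.Ioc (0 : ℝ) 1 ∧ ∀ K : Set (EucN N), IsCompact K → K ⊆ Ω →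
    ∃ C > 0, ∀ x ∈ K, ∀ y ∈ K, |f x - f y| ≤ C * dist x y ^ θ

/-- The boundary profile `g_γ`. -/
noncomputable def ggam {N : ℕ} (Ω : Set (EucN N)) (γ : ℝ) (x : EucN N) : ℝ :=
  if 0 < γ then bdist Ω x ^ (-γ) else -Real.log (bdist Ω x)

/-- `v` is in the `γ`-class: `−∞ < liminf v/g_γ ≤ limsup v/g_γ < +∞` at `∂Ω`. -/
def InGammaClass {N : ℕ} (Ω : Set (EucN N)) (γ : ℝ) (v : EucN N → ℝ) : Prop :=
  (∃ a : ℝ, ∀ᶠ x in toBoundary Ω, a ≤ v x / ggam Ω γ x) ∧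
  (∃ b : ℝ, ∀ᶠ x in toBoundary Ω, v x / ggam Ω γ x ≤ b)

/-- `u` blows up at `∂Ω`. -/
def BlowsUp {N : ℕ} (Ω : Set (EucN N)) (u : EucN N → ℝ) : Prop :=
  Tendsto u (toBoundary Ω) atTop

/-- The assumption `d(x)^{γ+2s} f(x) → C₁` as `d(x) → 0⁺`. -/
def BoundaryRate {N : ℕ} (Ω : Set (EucN N)) (s γ : ℝ) (f : EucN N → ℝ) (C₁ : ℝ) : Prop :=
  Tendsto (fun x => bdist Ω x ^ (γ + 2 * s) * f x) (toBoundary Ω) (nhds C₁)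

/-- The constant `c(N,s,β)`, a principal value over `{(t,y') : t > −1}`. -/
noncomputable def cBeta (N : ℕ) [NeZero N] (s β : ℝ) : ℝ :=
  CNs N s * pvAt {w : EucN N | -1 < w 0} 0
    (fun w => ((1 + w 0) ^ β - 1) / ‖w‖ ^ ((N : ℝ) + 2 * s))

/-- The constant `c(N,s)` of the logarithmic barrier. -/
noncomputable def cLog (N : ℕ) [NeZero N] (s : ℝ) : ℝ :=
  CNs N s * pvAt {w : EucN N | -1 < w 0} 0
    (fun w => Real.log (1 + w 0) / ‖w‖ ^ ((N : ℝ) + 2 * s))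

/-- `C₀` is a positive root of the equation defining the main blow-up constant. -/
def IsBlowUpConstant (N : ℕ) [NeZero N] (s m γ C₁ C₀ : ℝ) : Prop :=
  0 < C₀ ∧
  (m < 2 * s → -C₀ * cBeta N s γ + γ ^ m * C₀ ^ m - C₁ = 0) ∧
  (m = 2 * s → -C₀ * cLog N s + C₀ ^ (2 * s) - C₁ = 0)

/-- Minimal large (blow-up) viscosity solution of `lam·u + (−Δ)_Ω^s u + |Du|^m = f` in `Ω`. -/
def IsMinimalLargeSol {N : ℕ} (Ω : Set (EucN N)) (s lam mexp : ℝ)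
    (f u : EucN N → ℝ) : Prop :=
  ContinuousOn u Ω ∧ IsViscositySol Ω Ω s lam 1 mexp f u ∧ BlowsUp Ω u ∧
  ∀ v : EucN N → ℝ, ContinuousOn v Ω → IsViscositySol Ω Ω s lam 1 mexp f v →
    BlowsUp Ω v → ∀ x ∈ Ω, u x ≤ v x

/-- Euclidean norm of the component of `w` orthogonal to the first coordinate axis
(i.e. `|y′|` when `w = (t, y′)`). -/
noncomputable def ortho0Norm {N : ℕ} [NeZero N] (w : EucN N) : ℝ :=
  Real.sqrt (‖w‖ ^ 2 - (w 0) ^ 2)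


/-!
Write `w = (t, y′)`. On the region `|y′| ≥ 1/ρ ≥ 1` we also have `|w| ≥ 1/ρ`, so one factor
`|w|^{-s}` (or `|y′|^{-s}`) of the kernel is at most `ρ^s`, and what remains is dominated by a
function independent of `ρ` with finite integral:
* for `t ≥ 0`, `log (1 + t) ≤ (4/s) |w|^{s/2}`, leaving `|w|^{-(N+s/2)}`, integrable on `|w| ≥ 1`;
* for `-1 < t < 0`, `|log (1 + t)| ≤ 2 (1 + t)^{-1/2}` and `|w| ≥ |y′|`, leaving
  `(1 + t)^{-1/2} |y′|^{-(N+s)}`, whose integral over `(-1, 0) × {|y′| ≥ 1}` is a product of two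
  finite integrals by Fubini.
So the integral is `O(ρ^s)`, which is at most `C ρ^s |log ρ|` once `ρ < e⁻¹`.
-/

open Real ENNReal

section HeadTail

variable {n : ℕ}

def tailVec (w : EucN (n + 1)) : EucN n := WithLp.toLp 2 (Fin.tail (WithLp.ofLp w))

@[fun_prop]
theorem continuous_tailVec : Continuous (tailVec : EucN (n + 1) → EucN n) := by
  unfold tailVec; fun_prop

@[simp]
theorem tailVec_apply (w : EucN (n + 1)) (j : Fin n) : tailVec w j = w j.succ := rfl

theorem ortho0Norm_eq_norm_tailVec (w : EucN (n + 1)) : ortho0Norm w = ‖tailVec w‖ := by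
  rw [ortho0Norm, EuclideanSpace.norm_eq, EuclideanSpace.norm_eq,
    Real.sq_sqrt (by positivity), Fin.sum_univ_succ]
  simp

theorem measurePreserving_head_tailVec :
    MeasurePreserving (fun w : EucN (n + 1) => (w 0, tailVec w)) := by
  have h := (MeasurePreserving.id (volume : Measure ℝ)).prod (PiLp.volume_preserving_toLp (Fin n))
    |>.comp ((volume_preserving_piFinSuccAbove (fun _ : Fin (n + 1) => ℝ) 0).comp
      (PiLp.volume_preserving_ofLp (Fin (n + 1))))
  rw [← Measure.volume_eq_prod] at h
  convert h using 1
  ext w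
  · rfl
  · simp [MeasurableEquiv.piFinSuccAbove, Fin.tail]

theorem setLIntegral_head_mul_tailVec {F : ℝ → ℝ≥0∞} {G : EucN n → ℝ≥0∞}
    (hF : Measurable F) (hG : Measurable G) {I : Set ℝ} {T : Set (EucN n)}
    (hI : MeasurableSet I) (hT : MeasurableSet T) :
    ∫⁻ w in {w : EucN (n + 1) | w 0 ∈ I ∧ tailVec w ∈ T}, F (w 0) * G (tailVec w)
      = (∫⁻ t in I, F t) * ∫⁻ y in T, G y := by
  rw [← lintegral_prod_mul hF.aemeasurable hG.aemeasurable, Measure.prod_restrict,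
    ← Measure.volume_eq_prod]
  exact measurePreserving_head_tailVec.setLIntegral_comp_preimage (hI.prod hT)
    ((hF.comp measurable_fst).mul (hG.comp measurable_snd))

end HeadTail

theorem ortho0Norm_le_norm {N : ℕ} [NeZero N] (w : EucN N) : ortho0Norm w ≤ ‖w‖ :=
  (Real.sqrt_le_sqrt (sub_le_self _ (sq_nonneg (w 0)))).trans_eq (Real.sqrt_sq (norm_nonneg w))

theorem setLIntegral_rpow_neg_norm_lt_top {E : Type*} [NormedAddCommGroup E] [NormedSpace ℝ E]
    [FiniteDimensional ℝ E] [MeasurableSpace E] [BorelSpace E] {μ : Measure E}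
    [μ.IsAddHaarMeasure] {α : ℝ} (hα : (Module.finrank ℝ E : ℝ) < α) :
    ∫⁻ x in {x : E | 1 ≤ ‖x‖}, ENNReal.ofReal (‖x‖ ^ (-α)) ∂μ < ∞ := by
  have hα0 : 0 ≤ α := (Nat.cast_nonneg _).trans hα.le
  have hle : ∀ x ∈ {x : E | 1 ≤ ‖x‖}, ENNReal.ofReal (‖x‖ ^ (-α))
      ≤ ENNReal.ofReal (2 ^ α) * ENNReal.ofReal ((1 + ‖x‖) ^ (-α)) := by
    intro x (hx : 1 ≤ ‖x‖)
    rw [← ENNReal.ofReal_mul (by positivity)]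
    refine ENNReal.ofReal_le_ofReal ?_
    calc ‖x‖ ^ (-α) = 2 ^ α * (2 * ‖x‖) ^ (-α) := by
          rw [Real.mul_rpow zero_le_two (by positivity), Real.rpow_neg zero_le_two,
            ← mul_assoc, mul_inv_cancel₀ (by positivity), one_mul]
      _ ≤ 2 ^ α * (1 + ‖x‖) ^ (-α) := by
          gcongr 2 ^ α * ?_
          exact Real.rpow_le_rpow_of_nonpos (by positivity) (by linarith) (by linarith)
  calc _ ≤ ∫⁻ x in {x : E | 1 ≤ ‖x‖},
          ENNReal.ofReal (2 ^ α) * ENNReal.ofReal ((1 + ‖x‖) ^ (-α)) ∂μ :=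
        setLIntegral_mono (by fun_prop) hle
    _ ≤ ∫⁻ x, ENNReal.ofReal (2 ^ α) * ENNReal.ofReal ((1 + ‖x‖) ^ (-α)) ∂μ :=
        setLIntegral_le_lintegral _ _
    _ < ∞ := by
        rw [lintegral_const_mul _ (by fun_prop)]
        exact ENNReal.mul_lt_top ENNReal.ofReal_lt_top (finite_integral_one_add_norm hα)

theorem setLIntegral_one_add_rpow_neg_half_lt_top :
    ∫⁻ t in Ioo (-1 : ℝ) 0, ENNReal.ofReal ((1 + t) ^ (-(1 / 2) : ℝ)) < ∞ := by
  have h := (measurePreserving_add_left volume (1 : ℝ)).setLIntegral_comp_preimage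
    (s := Ioo 0 1) measurableSet_Ioo (f := fun u => ENNReal.ofReal (u ^ (-(1 / 2) : ℝ)))
    (by fun_prop)
  rw [preimage_const_add_Ioo] at h
  norm_num at h
  rw [h]
  exact ((intervalIntegral.integrableOn_Ioo_rpow_iff one_pos).mpr (by norm_num)).setLIntegral_lt_top

theorem rpow_neg_add_le_of_inv_le {ρ x β s : ℝ} (hρ : 0 < ρ) (hs : 0 ≤ s) (hx : 1 / ρ ≤ x) :
    x ^ (-(β + s)) ≤ ρ ^ s * x ^ (-β) := by
  have hx0 : 0 < x := (one_div_pos.mpr hρ).trans_le hx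
  have hxs : x ^ (-s) ≤ ρ ^ s := by
    calc x ^ (-s) ≤ (1 / ρ) ^ (-s) := Real.rpow_le_rpow_of_nonpos (by positivity) hx (by linarith)
      _ = ρ ^ s := by rw [one_div, Real.inv_rpow hρ.le, Real.rpow_neg hρ.le, inv_inv]
  rw [neg_add, Real.rpow_add hx0, mul_comm]
  exact mul_le_mul_of_nonneg_right hxs (by positivity)

theorem log_one_add_le_rpow {t r ε : ℝ} (ht : 0 ≤ t) (htr : t ≤ r) (hr : 1 ≤ r) (hε : 0 < ε)
    (hε1 : ε ≤ 1) : Real.log (1 + t) ≤ 2 / ε * r ^ ε := by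
  calc Real.log (1 + t) ≤ (1 + t) ^ ε / ε := Real.log_le_rpow_div (by linarith) hε
    _ ≤ (2 * r) ^ ε / ε := by gcongr; linarith
    _ = 2 ^ ε * r ^ ε / ε := by rw [Real.mul_rpow zero_le_two (by linarith)]
    _ ≤ 2 ^ (1 : ℝ) * r ^ ε / ε := by gcongr; norm_num
    _ = 2 / ε * r ^ ε := by rw [Real.rpow_one]; ring

theorem abs_log_le_rpow_neg_half {x : ℝ} (hx0 : 0 < x) (hx1 : x ≤ 1) :
    |Real.log x| ≤ 2 * x ^ (-(1 / 2) : ℝ) := by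
  have h := Real.abs_log_mul_self_rpow_lt x (1 / 2) hx0 hx1 (by norm_num)
  rw [abs_mul, Real.abs_rpow_of_nonneg hx0.le, abs_of_pos hx0] at h
  calc |Real.log x| = |Real.log x| * x ^ (1 / 2 : ℝ) * x ^ (-(1 / 2) : ℝ) := by
        rw [mul_assoc, ← Real.rpow_add hx0]; norm_num
    _ ≤ 2 * x ^ (-(1 / 2) : ℝ) := by gcongr; linarith

def logKernel (N : ℕ) [NeZero N] (s : ℝ) (w : EucN N) : ℝ :=
  |Real.log (1 + w 0)| * ‖w‖ ^ (-((N : ℝ) + 2 * s))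

def tailRegion (N : ℕ) [NeZero N] (ρ : ℝ) : Set (EucN N) :=
  {w | -1 < w 0 ∧ 1 / ρ ≤ ortho0Norm w}

section LogKernel

variable {N : ℕ} [NeZero N] {s ρ : ℝ}

@[fun_prop]
theorem measurable_logKernel : Measurable (logKernel N s) := by
  unfold logKernel; fun_prop

theorem logKernel_le_of_nonneg (hs : 0 < s) (hs2 : s ≤ 2) (hρ : 0 < ρ) {w : EucN N}
    (hw0 : 0 ≤ w 0) (hw : 1 / ρ ≤ ‖w‖) (hw1 : 1 ≤ ‖w‖) :
    logKernel N s w ≤ ρ ^ s * (4 / s * ‖w‖ ^ (-((N : ℝ) + s / 2))) := by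
  have hw_pos : 0 < ‖w‖ := one_pos.trans_le hw1
  have hlog : |Real.log (1 + w 0)| ≤ 4 / s * ‖w‖ ^ (s / 2) := by
    rw [abs_of_nonneg (Real.log_nonneg (by linarith))]
    convert log_one_add_le_rpow hw0 ((le_abs_self _).trans (PiLp.norm_apply_le w 0)) hw1
      (half_pos hs) (by linarith) using 2
    field_simp; norm_num
  calc logKernel N s w ≤ 4 / s * ‖w‖ ^ (s / 2) * ‖w‖ ^ (-((N : ℝ) + 2 * s)) := by
        unfold logKernel; gcongr
    _ = 4 / s * ‖w‖ ^ (-(((N : ℝ) + s / 2) + s)) := by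
        rw [mul_assoc, ← Real.rpow_add hw_pos]; ring_nf
    _ ≤ 4 / s * (ρ ^ s * ‖w‖ ^ (-((N : ℝ) + s / 2))) := by
        gcongr; exact rpow_neg_add_le_of_inv_le hρ hs.le hw
    _ = ρ ^ s * (4 / s * ‖w‖ ^ (-((N : ℝ) + s / 2))) := by ring

theorem logKernel_le_of_neg (hs : 0 < s) (hρ : 0 < ρ) {w : EucN N}
    (hw0 : w 0 ∈ Ioo (-1) 0) (hw : 1 / ρ ≤ ortho0Norm w) :
    logKernel N s w ≤
      ρ ^ s * (2 * (1 + w 0) ^ (-(1 / 2) : ℝ) * ortho0Norm w ^ (-((N : ℝ) + s))) := by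
  have ho_pos : 0 < ortho0Norm w := (one_div_pos.mpr hρ).trans_le hw
  obtain ⟨ht1, ht0⟩ := hw0
  have hc : 0 ≤ 2 * (1 + w 0) ^ (-(1 / 2) : ℝ) :=
    mul_nonneg zero_le_two (Real.rpow_nonneg (by linarith) _)
  calc logKernel N s w
      ≤ 2 * (1 + w 0) ^ (-(1 / 2) : ℝ) * ortho0Norm w ^ (-((N : ℝ) + s + s)) := by
        rw [logKernel, add_assoc, ← two_mul]
        refine mul_le_mul (abs_log_le_rpow_neg_half (by linarith) (by linarith)) ?_
          (by positivity) hc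
        exact Real.rpow_le_rpow_of_nonpos ho_pos (ortho0Norm_le_norm w) (by linarith)
    _ ≤ 2 * (1 + w 0) ^ (-(1 / 2) : ℝ) * (ρ ^ s * ortho0Norm w ^ (-((N : ℝ) + s))) :=
        mul_le_mul_of_nonneg_left (rpow_neg_add_le_of_inv_le hρ hs.le hw) hc
    _ = _ := by ring

theorem setLIntegral_logKernel_inter_nonneg_le (hs : 0 < s) (hs2 : s ≤ 2) (hρ : 0 < ρ)
    (hρ1 : ρ ≤ 1) :
    ∫⁻ w in tailRegion N ρ ∩ {w | 0 ≤ w 0}, ENNReal.ofReal (logKernel N s w)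
      ≤ ENNReal.ofReal (ρ ^ s) * (ENNReal.ofReal (4 / s) *
          ∫⁻ w in {w : EucN N | 1 ≤ ‖w‖}, ENNReal.ofReal (‖w‖ ^ (-((N : ℝ) + s / 2)))) := by
  have hR : 1 ≤ 1 / ρ := one_le_one_div hρ hρ1
  have hnorm : ∀ w ∈ tailRegion N ρ, 1 / ρ ≤ ‖w‖ :=
    fun w hw => hw.2.trans (ortho0Norm_le_norm w)
  rw [← lintegral_const_mul _ (by fun_prop), ← lintegral_const_mul _ (by fun_prop)]
  refine (setLIntegral_mono (by fun_prop) fun w hw => ?_).trans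
    (lintegral_mono_set fun w hw => hR.trans (hnorm w hw.1))
  rw [← ENNReal.ofReal_mul (by positivity), ← ENNReal.ofReal_mul (Real.rpow_nonneg hρ.le s)]
  exact ENNReal.ofReal_le_ofReal
    (logKernel_le_of_nonneg hs hs2 hρ hw.2 (hnorm w hw.1) (hR.trans (hnorm w hw.1)))

end LogKernel

theorem setLIntegral_logKernel_sdiff_nonneg_le (n : ℕ) {s ρ : ℝ} (hs : 0 < s) (hρ : 0 < ρ)
    (hρ1 : ρ ≤ 1) :
    ∫⁻ w in tailRegion (n + 1) ρ \ {w | 0 ≤ w 0}, ENNReal.ofReal (logKernel (n + 1) s w)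
      ≤ ENNReal.ofReal (ρ ^ s) * (2 *
          ((∫⁻ t in Ioo (-1 : ℝ) 0, ENNReal.ofReal ((1 + t) ^ (-(1 / 2) : ℝ))) *
            ∫⁻ y in {y : EucN n | 1 ≤ ‖y‖},
              ENNReal.ofReal (‖y‖ ^ (-(((n + 1 : ℕ) : ℝ) + s))))) := by
  have hR : 1 ≤ 1 / ρ := one_le_one_div hρ hρ1
  rw [← setLIntegral_head_mul_tailVec (by fun_prop) (by fun_prop) measurableSet_Ioo
    (measurableSet_le measurable_const measurable_norm), ← lintegral_const_mul _ (by fun_prop),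
    ← lintegral_const_mul _ (by fun_prop)]
  refine (setLIntegral_mono (by fun_prop) fun w hw => ?_).trans
    (lintegral_mono_set fun w hw => ?_)
  · have h1t : 0 < 1 + w 0 := by linarith [hw.1.1]
    have h := logKernel_le_of_neg hs hρ ⟨hw.1.1, not_le.mp hw.2⟩ hw.1.2
    rw [ortho0Norm_eq_norm_tailVec] at h
    refine (ENNReal.ofReal_le_ofReal h).trans_eq ?_
    rw [ENNReal.ofReal_mul (Real.rpow_nonneg hρ.le s), mul_assoc,
      ENNReal.ofReal_mul zero_le_two, ENNReal.ofReal_ofNat,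
      ENNReal.ofReal_mul (Real.rpow_nonneg h1t.le _)]
  · exact ⟨⟨hw.1.1, not_le.mp hw.2⟩, hR.trans (ortho0Norm_eq_norm_tailVec w ▸ hw.1.2)⟩

theorem exists_lintegral_logKernel_tailRegion_le (n : ℕ) {s : ℝ} (hs : 0 < s) (hs2 : s ≤ 2) :
    ∃ L < ∞, ∀ ρ, 0 < ρ → ρ ≤ 1 →
      ∫⁻ w in tailRegion (n + 1) ρ, ENNReal.ofReal (logKernel (n + 1) s w)
        ≤ ENNReal.ofReal (ρ ^ s) * L := by
  have hlt : ∀ k : ℕ, ∀ {α : ℝ}, (k : ℝ) < α →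
      ∫⁻ y in {y : EucN k | 1 ≤ ‖y‖}, ENNReal.ofReal (‖y‖ ^ (-α)) < ∞ := fun k α hα =>
    setLIntegral_rpow_neg_norm_lt_top (by rwa [finrank_euclideanSpace_fin])
  have hsplit : ∀ ρ, ∫⁻ w in tailRegion (n + 1) ρ, ENNReal.ofReal (logKernel (n + 1) s w) =
      (∫⁻ w in tailRegion (n + 1) ρ ∩ {w | 0 ≤ w 0}, ENNReal.ofReal (logKernel (n + 1) s w)) +
        ∫⁻ w in tailRegion (n + 1) ρ \ {w | 0 ≤ w 0}, ENNReal.ofReal (logKernel (n + 1) s w) :=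
    fun ρ => (lintegral_inter_add_sdiff _ _ (measurableSet_le measurable_const (by fun_prop))).symm
  refine ⟨_, ?_, fun ρ hρ hρ1 => (hsplit ρ).trans_le <|
    (add_le_add (setLIntegral_logKernel_inter_nonneg_le hs hs2 hρ hρ1)
      (setLIntegral_logKernel_sdiff_nonneg_le n hs hρ hρ1)).trans_eq (mul_add _ _ _).symm⟩
  exact ENNReal.add_lt_top.2
    ⟨ENNReal.mul_lt_top ENNReal.ofReal_lt_top (hlt (n + 1) (by linarith)),
      ENNReal.mul_lt_top (by simp) (ENNReal.mul_lt_top setLIntegral_one_add_rpow_neg_half_lt_top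
        (hlt n (by push_cast; linarith)))⟩

theorem log_kernel_tail_estimate_general
    (N : ℕ) [NeZero N] (s : ℝ) (hs : s ∈ Set.Ioo (1 / 2 : ℝ) 1) :
    ∃ C > (0 : ℝ), ∃ ρ₀ ∈ Set.Ioo (0 : ℝ) 1, ∀ ρ ∈ Set.Ioo (0 : ℝ) ρ₀,
      (∫ w in {w : EucN N | -1 < w 0 ∧ 1 / ρ ≤ ortho0Norm w},
          |Real.log (1 + w 0)| * ‖w‖ ^ (-((N : ℝ) + 2 * s)))
        ≤ C * ρ ^ s * |Real.log ρ| := by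
  obtain ⟨n, rfl⟩ := Nat.exists_eq_succ_of_ne_zero (NeZero.ne N)
  obtain ⟨L, hL, hbound⟩ :=
    exists_lintegral_logKernel_tailRegion_le n (by linarith [hs.1]) (by linarith [hs.2])
  have he : exp (-1) < 1 := exp_lt_one_iff.mpr (by norm_num)
  refine ⟨L.toReal + 1, by positivity, exp (-1), ⟨exp_pos _, he⟩, fun ρ ⟨hρ, hρe⟩ => ?_⟩
  have hlog : 1 ≤ |Real.log ρ| := by
    have := Real.log_lt_log hρ hρe
    rw [Real.log_exp] at this
    rw [abs_of_neg (by linarith)]; linarith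
  calc (∫ w in tailRegion (n + 1) ρ, logKernel (n + 1) s w)
      = (∫⁻ w in tailRegion (n + 1) ρ, ENNReal.ofReal (logKernel (n + 1) s w)).toReal :=
        integral_eq_lintegral_of_nonneg_ae (ae_of_all _ fun w => by unfold logKernel; positivity)
          measurable_logKernel.aestronglyMeasurable
    _ ≤ (ENNReal.ofReal (ρ ^ s) * L).toReal :=
        ENNReal.toReal_mono (ENNReal.mul_ne_top ENNReal.ofReal_ne_top hL.ne)
          (hbound ρ hρ (hρe.trans he).le)
    _ = ρ ^ s * L.toReal := by rw [ENNReal.toReal_mul, ENNReal.toReal_ofReal (by positivity)]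
    _ ≤ (L.toReal + 1) * ρ ^ s * |Real.log ρ| := by
        have : 0 ≤ ρ ^ s * L.toReal := by positivity
        nlinarith [Real.rpow_nonneg hρ.le s]

/-- Tail estimate of the logarithmic kernel integral. -/
theorem log_kernel_tail_estimate
    (N : ℕ) [NeZero N] (hN : 2 ≤ N) (s : ℝ) (hs : s ∈ Set.Ioo (1 / 2 : ℝ) 1) :
    ∃ C > (0 : ℝ), ∃ ρ₀ ∈ Set.Ioo (0 : ℝ) 1, ∀ ρ ∈ Set.Ioo (0 : ℝ) ρ₀,
      (∫ w in {w : EucN N | -1 < w 0 ∧ 1 / ρ ≤ ortho0Norm w},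
          |Real.log (1 + w 0)| * ‖w‖ ^ (-((N : ℝ) + 2 * s)))
        ≤ C * ρ ^ s * |Real.log ρ| :=
  log_kernel_tail_estimate_general N s hs

end
end
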